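/- Let R be a ring, let M be an Artinian R-module, let F, G : ModuleCat R ⥤ ModuleCat R be additive functors such that G preserves monomorphisms, and let α : F ⟶ G be a natural transformation. Then there exists a submodule N of M such that the component of α at the quotient module M ⧸ N (regarded as an object of ModuleCat R) is zero, and every submodule N' of M for which the component of α at M ⧸ N' is zero satisfies N ≤ N'. -/

import Mathlib

open CategoryTheory Limits

universe u

/-!
The submodules `N` for which `α` annihilates `M ⧸ N` are closed under `⊓`: the diagonal
map embeds `M ⧸ (N ⊓ N')` into `M ⧸ N ⊞ M ⧸ N'`, additivity of `F` makes `α` vanish on the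
biproduct, and since `G` preserves monomorphisms, naturality lets `α` vanish on a subobject
too. The quotient by `⊤` is zero, hence annihilated, so the Artinian condition provides a minimal
`N`, which is least by closedness under `⊓`.
-/

theorem exists_isLeast_of_inf_mem {α : Type*} [SemilatticeInf α] [WellFoundedLT α] {s : Set α}
    (hne : s.Nonempty) (hinf : ∀ a ∈ s, ∀ b ∈ s, a ⊓ b ∈ s) : ∃ a, IsLeast s a := by
  obtain ⟨a, ha⟩ := exists_minimal_of_wellFoundedLT (· ∈ s) hne
  have hdir : DirectedOn (fun x y ↦ y ≤ x) s :=
    fun a ha b hb ↦ ⟨a ⊓ b, hinf a ha b hb, inf_le_left, inf_le_right⟩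
  exact ⟨a, hdir.minimal_iff_isLeast.mp ha⟩

namespace Submodule

variable {R M : Type*} [Ring R] [AddCommGroup M] [Module R M]

def quotientInfToProdQuotient (p q : Submodule R M) : M ⧸ (p ⊓ q) →ₗ[R] (M ⧸ p) × (M ⧸ q) :=
  (p ⊓ q).liftQ (p.mkQ.prod q.mkQ) (by rw [LinearMap.ker_prod, ker_mkQ, ker_mkQ])

theorem quotientInfToProdQuotient_injective (p q : Submodule R M) :
    Function.Injective (quotientInfToProdQuotient p q) :=
  LinearMap.ker_eq_bot.mp <| ker_liftQ_eq_bot' _ _ <| by rw [LinearMap.ker_prod, ker_mkQ, ker_mkQ]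

end Submodule

namespace CategoryTheory.NatTrans

section

variable {C D : Type*} [Category C] [Category D] {F G : C ⥤ D} (α : F ⟶ G)

theorem app_eq_zero_of_isZero [HasZeroMorphisms C] [HasZeroMorphisms D]
    [F.PreservesZeroMorphisms] {X : C} (hX : IsZero X) : α.app X = 0 :=
  (F.map_isZero hX).eq_of_src _ _

theorem app_eq_zero_of_mono [HasZeroMorphisms D] [G.PreservesMonomorphisms] {X Y : C}
    (i : X ⟶ Y) [Mono i] (hY : α.app Y = 0) : α.app X = 0 := by
  rw [← cancel_mono (G.map i), ← α.naturality, hY, comp_zero, zero_comp]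

theorem app_biprod_eq_zero [Preadditive C] [Preadditive D] [F.Additive] {X Y : C}
    [HasBinaryBiproduct X Y] (hX : α.app X = 0) (hY : α.app Y = 0) : α.app (X ⊞ Y) = 0 := by
  rw [← Category.id_comp (α.app _), ← F.map_id, ← biprod.total, F.map_add, Preadditive.add_comp,
    F.map_comp, F.map_comp, Category.assoc, Category.assoc, α.naturality, α.naturality,
    ← Category.assoc, ← Category.assoc, hX, hY, comp_zero, comp_zero, zero_comp, zero_comp, add_zero]

end

variable {R : Type u} [Ring R] {M : Type u} [AddCommGroup M] [Module R M]
  {F G : ModuleCat.{u} R ⥤ ModuleCat.{u} R} [F.Additive] [G.PreservesMonomorphisms] (α : F ⟶ G)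

theorem app_quotient_inf_eq_zero {N N' : Submodule R M} (hN : α.app (ModuleCat.of R (M ⧸ N)) = 0)
    (hN' : α.app (ModuleCat.of R (M ⧸ N')) = 0) : α.app (ModuleCat.of R (M ⧸ (N ⊓ N'))) = 0 := by
  let i := ModuleCat.ofHom (N.quotientInfToProdQuotient N') ≫
    (ModuleCat.biprodIsoProd (.of R (M ⧸ N)) (.of R (M ⧸ N'))).inv
  have : Mono i := by
    have : Mono (ModuleCat.ofHom (N.quotientInfToProdQuotient N')) :=
      (ModuleCat.mono_iff_injective _).mpr (N.quotientInfToProdQuotient_injective N')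
    exact mono_comp _ _
  exact α.app_eq_zero_of_mono i (α.app_biprod_eq_zero hN hN')

end CategoryTheory.NatTrans

theorem exists_minimal_annihilated_quotient_general (R : Type u) [Ring R]
    (M : Type u) [AddCommGroup M] [Module R M] [IsArtinian R M]
    (F G : ModuleCat.{u} R ⥤ ModuleCat.{u} R) [F.Additive]
    [G.PreservesMonomorphisms] (α : F ⟶ G) :
    ∃ N : Submodule R M, α.app (ModuleCat.of R (M ⧸ N)) = 0 ∧
      ∀ N' : Submodule R M, α.app (ModuleCat.of R (M ⧸ N')) = 0 → N ≤ N' := by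
  have htop : α.app (ModuleCat.of R (M ⧸ (⊤ : Submodule R M))) = 0 :=
    α.app_eq_zero_of_isZero (ModuleCat.isZero_of_subsingleton _)
  exact exists_isLeast_of_inf_mem ⟨⊤, htop⟩ fun _ hN _ hN' ↦ α.app_quotient_inf_eq_zero hN hN'

/-- Every Artinian module `M` has a unique minimal submodule `N` such that the quotient
`M ⧸ N` is annihilated by a natural transformation `α : F ⟶ G` between additive endofunctors
of `ModuleCat R`, provided `G` preserves monomorphisms. -/
theorem exists_minimal_annihilated_quotient (R : Type u) [Ring R]
    (M : Type u) [AddCommGroup M] [Module R M] [IsArtinian R M]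
    (F G : ModuleCat.{u} R ⥤ ModuleCat.{u} R) [F.Additive] [G.Additive]
    [G.PreservesMonomorphisms] (α : F ⟶ G) :
    ∃ N : Submodule R M, α.app (ModuleCat.of R (M ⧸ N)) = 0 ∧
      ∀ N' : Submodule R M, α.app (ModuleCat.of R (M ⧸ N')) = 0 → N ≤ N' :=
  exists_minimal_annihilated_quotient_general R M F G α
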